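/- arXiv:2401.04833 — 3 statements merged into one kernel-verified Lean document; each statement's English description precedes it below -/
import Mathlib

section
/- Let W be a finite Weyl group acting on the real vector space V spanned by the root system Δ, and let γ₁, …, γ_d ∈ Δ be roots. Then dim Ker(s_{γ₁}⋯s_{γ_d} + 1) = d if and only if the roots γ₁, …, γ_d are pairwise orthogonal. -/
set_option linter.unusedSectionVars false

open scoped RealInnerProductSpace
open Module

variable {V : Type*} [NormedAddCommGroup V] [InnerProductSpace ℝ V] [FiniteDimensional ℝ V]

/-- The reflection in the hyperplane orthogonal to `γ` (the identity if `γ = 0`). -/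
noncomputable def srefl (γ : V) : V →ₗ[ℝ] V :=
  LinearMap.id - (LinearMap.toSpanSingleton ℝ V ((2 / ⟪γ, γ⟫) • γ)).comp (innerSL ℝ γ).toLinearMap

lemma srefl_apply (γ x : V) : srefl γ x = x - (2 * ⟪γ, x⟫ / ⟪γ, γ⟫) • γ := by
  simp [srefl, LinearMap.toSpanSingleton, smul_smul]
  ring_nf

lemma srefl_involutive (γ : V) : Function.Involutive (srefl γ) := by
  intro x
  rcases eq_or_ne γ 0 with h | h
  · simp [srefl_apply, h]
  · have hγ : ⟪γ, γ⟫ ≠ 0 := fun hc => h (inner_self_eq_zero.mp hc)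
    rw [srefl_apply, srefl_apply, inner_sub_right, real_inner_smul_right]
    field_simp
    ring_nf
    module

/-- The reflection in `γ` as a linear automorphism of `V`. -/
noncomputable def sref (γ : V) : V ≃ₗ[ℝ] V :=
  { srefl γ with
    invFun := srefl γ
    left_inv := srefl_involutive γ
    right_inv := srefl_involutive γ }

/-- A finite reduced crystallographic root system spanning `V`. -/
structure IsRootSystem (Δ : Set V) : Prop where
  finite : Δ.Finite
  nonzero : (0 : V) ∉ Δ
  span_top : Submodule.span ℝ Δ = ⊤
  refl_mem : ∀ γ ∈ Δ, ∀ β ∈ Δ, sref γ β ∈ Δ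
  crystallographic : ∀ γ ∈ Δ, ∀ β ∈ Δ, ∃ m : ℤ, 2 * ⟪β, γ⟫ / ⟪γ, γ⟫ = (m : ℝ)
  reduced : ∀ γ ∈ Δ, ∀ t : ℝ, t • γ ∈ Δ → t = 1 ∨ t = -1

/-- The Weyl group: the subgroup of `GL(V)` generated by the reflections in the roots. -/
def weylGroup (Δ : Set V) : Subgroup (V ≃ₗ[ℝ] V) :=
  Subgroup.closure {g | ∃ γ ∈ Δ, g = sref γ}

/-- The reflection length of `w`: the least number of reflections in roots whose
product is `w`. -/
noncomputable def reflLength (Δ : Set V) (w : V ≃ₗ[ℝ] V) : ℕ :=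
  sInf {r | ∃ γ : Fin r → V, (∀ i, γ i ∈ Δ) ∧ w = (List.ofFn fun i => sref (γ i)).prod}

/-- A base (system of simple roots `α` with positive roots `Pos`) for the root system `Δ`. -/
structure IsBase (Δ Pos : Set V) {n : ℕ} (α : Fin n → V) : Prop where
  pos_subset : Pos ⊆ Δ
  simple_mem : ∀ i, α i ∈ Pos
  mem_or_neg : ∀ γ ∈ Δ, γ ∈ Pos ∨ -γ ∈ Pos
  not_neg : ∀ γ ∈ Pos, -γ ∉ Pos
  pos_combo : ∀ γ ∈ Pos, ∃ c : Fin n → ℕ, γ = ∑ j, (c j : ℝ) • α j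

/-- `l` is a word (in the simple reflections) for `w`. -/
def IsWord {n : ℕ} (α : Fin n → V) (l : List (Fin n)) (w : V ≃ₗ[ℝ] V) : Prop :=
  (l.map fun j => sref (α j)).prod = w

/-- The Coxeter length of `w` with respect to the simple system `α`. -/
noncomputable def len {n : ℕ} (α : Fin n → V) (w : V ≃ₗ[ℝ] V) : ℕ :=
  sInf {r | ∃ l : List (Fin n), IsWord α l w ∧ l.length = r}

/-- Bruhat order: `v ≤ w` iff some reduced word for `w` has a subword with value `v`. -/
def bruhatLE {n : ℕ} (α : Fin n → V) (v w : V ≃ₗ[ℝ] V) : Prop :=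
  ∃ l : List (Fin n), IsWord α l w ∧ l.length = len α w ∧
    ∃ l' : List (Fin n), l'.Sublist l ∧ IsWord α l' v

/-- The product of the simple reflections indexed by a word given as a function
`i : Fin m → Fin n`, along a list of positions. -/
noncomputable def fwordProd {n m : ℕ} (α : Fin n → V) (i : Fin m → Fin n)
    (l : List (Fin m)) : V ≃ₗ[ℝ] V :=
  (l.map fun j => sref (α (i j))).prod

/-- The full product `s_{i₁} ⋯ s_{i_m}`. -/
noncomputable def fullProd {n m : ℕ} (α : Fin n → V) (i : Fin m → Fin n) : V ≃ₗ[ℝ] V :=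
  fwordProd α i (List.finRange m)

/-- The root `β_k = s_{i₁} ⋯ s_{i_{k-1}} (α_{i_k})` associated to the `k`-th position
of the word `i` (positions indexed from `0`). -/
noncomputable def betaRoot {n m : ℕ} (α : Fin n → V) (i : Fin m → Fin n) (k : Fin m) : V :=
  fwordProd α i ((List.finRange m).take k) (α (i k))

/-- The value of the subword of `i` obtained by deleting the positions `p t`. -/
noncomputable def complProd {n m d : ℕ} (α : Fin n → V) (i : Fin m → Fin n)
    (p : Fin d → Fin m) : V ≃ₗ[ℝ] V :=
  fwordProd α i ((List.finRange m).filter fun j => ∀ t, p t ≠ j)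

/-!
Each reflection moves a vector only along its root, so `w = s_{γ₁} ⋯ s_{γ_d}` moves every vector
within the span of the roots; hence `Ker (w + 1)` lies in that span and has dimension at most `d`.
If the roots are pairwise orthogonal (and nonzero), `w` acts as `-1` on their span, which then has
dimension `d`. Conversely, if `Ker (w + 1)` has dimension `d`, its vectors orthogonal to `γ₁` are
fixed by `s_{γ₁}`, hence negated by `s_{γ₂} ⋯ s_{γ_d}`. They form a space of dimension at least
`d - 1` inside the span of `γ₂, …, γ_d`, so the two coincide: `γ₁` is orthogonal to the other
roots, and `Ker (s_{γ₂} ⋯ s_{γ_d} + 1)` has dimension `d - 1`, so induction applies.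
-/

theorem Submodule.finrank_le_finrank_inf_ker_add_one {K M : Type*} [DivisionRing K]
    [AddCommGroup M] [Module K M] [FiniteDimensional K M] (p : Submodule K M)
    (f : M →ₗ[K] K) : finrank K p ≤ finrank K ↥(p ⊓ LinearMap.ker f) + 1 := by
  have hsup := Submodule.finrank_sup_add_finrank_inf_eq p (LinearMap.ker f)
  have hrank := f.finrank_range_add_finrank_ker
  have hrange : finrank K (LinearMap.range f) ≤ 1 := by
    simpa using Submodule.finrank_le (LinearMap.range f)
  have hle : finrank K ↥(p ⊔ LinearMap.ker f) ≤ finrank K M := Submodule.finrank_le _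
  omega

lemma LinearEquiv.mem_ker_coe_add_one_iff {R M : Type*} [Ring R] [AddCommGroup M] [Module R M]
    (w : M ≃ₗ[R] M) (x : M) : x ∈ LinearMap.ker ((w : M →ₗ[R] M) + 1) ↔ w x = -x := by
  rw [LinearMap.mem_ker, LinearMap.add_apply, Module.End.one_apply, LinearEquiv.coe_coe,
    add_eq_zero_iff_eq_neg]

lemma sref_apply (γ x : V) : sref γ x = x - (2 * ⟪γ, x⟫ / ⟪γ, γ⟫) • γ := srefl_apply γ x

lemma sref_sref (γ x : V) : sref γ (sref γ x) = x := srefl_involutive γ x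

lemma sref_apply_of_inner_eq_zero {γ x : V} (h : ⟪γ, x⟫ = 0) : sref γ x = x := by
  simp [sref_apply, h]

lemma sref_apply_self {γ : V} (h : γ ≠ 0) : sref γ γ = -γ := by
  have hγ : ⟪γ, γ⟫ ≠ 0 := fun hc => h (inner_self_eq_zero.mp hc)
  rw [sref_apply]
  field_simp
  module

noncomputable def reflProd {d : ℕ} (γ : Fin d → V) : V ≃ₗ[ℝ] V :=
  (List.ofFn fun i => sref (γ i)).prod

lemma reflProd_succ_apply {d : ℕ} (γ : Fin (d + 1) → V) (x : V) :
    reflProd γ x = sref (γ 0) (reflProd (Fin.tail γ) x) := by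
  rw [reflProd, List.ofFn_succ, List.prod_cons]
  rfl

lemma reflProd_apply_sub_mem_span {d : ℕ} (γ : Fin d → V) (x : V) :
    reflProd γ x - x ∈ Submodule.span ℝ (Set.range γ) := by
  induction d with
  | zero => simp [reflProd]
  | succ d ih =>
    set y := reflProd (Fin.tail γ) x
    have hy : y - x ∈ Submodule.span ℝ (Set.range γ) :=
      Submodule.span_mono (Set.range_comp_subset_range Fin.succ γ) (ih (Fin.tail γ))
    have hsref : sref (γ 0) y - y ∈ Submodule.span ℝ (Set.range γ) := by
      rw [sref_apply, sub_sub_cancel_left]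
      exact Submodule.neg_mem _ (Submodule.smul_mem _ _ (Submodule.subset_span ⟨0, rfl⟩))
    rw [reflProd_succ_apply, ← sub_add_sub_cancel _ y]
    exact Submodule.add_mem _ hsref hy

lemma ker_reflProd_add_one_le_span {d : ℕ} (γ : Fin d → V) :
    LinearMap.ker ((reflProd γ : V →ₗ[ℝ] V) + 1) ≤ Submodule.span ℝ (Set.range γ) := by
  intro x hx
  have hmem := reflProd_apply_sub_mem_span γ x
  rw [(reflProd γ).mem_ker_coe_add_one_iff] at hx
  rw [hx, show -x - x = (-2 : ℝ) • x by module] at hmem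
  simpa using (Submodule.smul_mem_iff _ (by norm_num : (-2 : ℝ) ≠ 0)).mp hmem

lemma finrank_ker_reflProd_add_one_le {d : ℕ} (γ : Fin d → V) :
    finrank ℝ (LinearMap.ker ((reflProd γ : V →ₗ[ℝ] V) + 1)) ≤ d :=
  (Submodule.finrank_mono (ker_reflProd_add_one_le_span γ)).trans
    ((finrank_range_le_card γ).trans_eq (Fintype.card_fin d))

theorem pairwise_inner_eq_zero_of_finrank_ker_reflProd_add_one {d : ℕ} (γ : Fin d → V)
    (h : finrank ℝ (LinearMap.ker ((reflProd γ : V →ₗ[ℝ] V) + 1)) = d) :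
    Pairwise fun i j => ⟪γ i, γ j⟫ = 0 := by
  induction d with
  | zero => exact fun i => i.elim0
  | succ d ih =>
    set K := LinearMap.ker ((reflProd γ : V →ₗ[ℝ] V) + 1)
    set Kt := LinearMap.ker ((reflProd (Fin.tail γ) : V →ₗ[ℝ] V) + 1)
    set H := LinearMap.ker (innerₗ V (γ 0))
    have hKH : K ⊓ H ≤ Kt := by
      intro x hx
      obtain ⟨hxK, hx0⟩ : x ∈ K ∧ ⟪γ 0, x⟫ = 0 := hx
      rw [(reflProd γ).mem_ker_coe_add_one_iff, reflProd_succ_apply] at hxK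
      rw [(reflProd _).mem_ker_coe_add_one_iff, ← sref_sref (γ 0) (reflProd _ x), hxK, map_neg,
        sref_apply_of_inner_eq_zero hx0]
    have hKH_dim : d ≤ finrank ℝ ↥(K ⊓ H) := by
      have : finrank ℝ K ≤ finrank ℝ ↥(K ⊓ H) + 1 := K.finrank_le_finrank_inf_ker_add_one _
      omega
    have hKt_dim : finrank ℝ Kt = d :=
      le_antisymm (finrank_ker_reflProd_add_one_le _)
        (hKH_dim.trans (Submodule.finrank_mono hKH))
    have hspan_dim : finrank ℝ (Submodule.span ℝ (Set.range (Fin.tail γ))) ≤ d :=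
      (finrank_range_le_card _).trans_eq (Fintype.card_fin d)
    have hKH_eq : K ⊓ H = Submodule.span ℝ (Set.range (Fin.tail γ)) :=
      Submodule.eq_of_le_of_finrank_le (hKH.trans (ker_reflProd_add_one_le_span _))
        (hspan_dim.trans hKH_dim)
    have hhead (j : Fin d) : ⟪γ 0, γ j.succ⟫ = 0 :=
      (hKH_eq.symm ▸ Submodule.subset_span ⟨j, rfl⟩ : γ j.succ ∈ K ⊓ H).2
    have htail := ih (Fin.tail γ) hKt_dim
    intro i j hij
    cases i using Fin.cases with
    | zero =>
      cases j using Fin.cases with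
      | zero => exact absurd rfl hij
      | succ j => exact hhead j
    | succ i =>
      cases j using Fin.cases with
      | zero => rw [real_inner_comm]; exact hhead i
      | succ j => exact htail (fun hc => hij (congrArg Fin.succ hc))

lemma reflProd_apply_of_forall_inner_eq_zero {d : ℕ} (γ : Fin d → V) {x : V}
    (hx : ∀ i, ⟪γ i, x⟫ = 0) : reflProd γ x = x := by
  induction d with
  | zero => rfl
  | succ d ih =>
    rw [reflProd_succ_apply, ih (Fin.tail γ) (fun i => hx i.succ),
      sref_apply_of_inner_eq_zero (hx 0)]

lemma reflProd_apply_self_of_pairwise_inner_eq_zero {d : ℕ} (γ : Fin d → V)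
    (h0 : ∀ i, γ i ≠ 0) (horth : Pairwise fun i j => ⟪γ i, γ j⟫ = 0) (i : Fin d) :
    reflProd γ (γ i) = -γ i := by
  induction d with
  | zero => exact i.elim0
  | succ d ih =>
    rw [reflProd_succ_apply]
    cases i using Fin.cases with
    | zero =>
      rw [reflProd_apply_of_forall_inner_eq_zero (Fin.tail γ) fun j => horth (Fin.succ_ne_zero j),
        sref_apply_self (h0 0)]
    | succ i =>
      change sref (γ 0) (reflProd (Fin.tail γ) (Fin.tail γ i)) = -Fin.tail γ i
      rw [ih (Fin.tail γ) (fun j => h0 j.succ)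
          (fun j k hjk => horth ((Fin.succ_injective _).ne hjk)),
        map_neg,
        sref_apply_of_inner_eq_zero (x := Fin.tail γ i) (horth (Fin.succ_ne_zero i).symm)]

theorem finrank_ker_reflProd_add_one_of_pairwise_inner_eq_zero {d : ℕ} (γ : Fin d → V)
    (h0 : ∀ i, γ i ≠ 0) (horth : Pairwise fun i j => ⟪γ i, γ j⟫ = 0) :
    finrank ℝ (LinearMap.ker ((reflProd γ : V →ₗ[ℝ] V) + 1)) = d := by
  have hspan_le : Submodule.span ℝ (Set.range γ) ≤ LinearMap.ker ((reflProd γ : V →ₗ[ℝ] V) + 1) :=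
    Submodule.span_le.mpr <| Set.range_subset_iff.mpr fun i =>
      (reflProd γ).mem_ker_coe_add_one_iff _ |>.mpr
        (reflProd_apply_self_of_pairwise_inner_eq_zero γ h0 horth i)
  rw [le_antisymm (ker_reflProd_add_one_le_span γ) hspan_le,
    finrank_span_eq_card (linearIndependent_of_ne_zero_of_inner_eq_zero h0 horth),
    Fintype.card_fin]

theorem statement0 {Δ : Set V} (hΔ : IsRootSystem Δ)
    {d : ℕ} (γ : Fin d → V) (hγ : ∀ i, γ i ∈ Δ) :
    finrank ℝ (LinearMap.ker
        ((↑((List.ofFn fun i => sref (γ i)).prod : V ≃ₗ[ℝ] V) : V →ₗ[ℝ] V) + 1)) = d ↔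
      ∀ i j, i ≠ j → ⟪γ i, γ j⟫ = 0 :=
  ⟨pairwise_inner_eq_zero_of_finrank_ker_reflProd_add_one γ,
    finrank_ker_reflProd_add_one_of_pairwise_inner_eq_zero γ
      fun i hi => hΔ.nonzero (hi ▸ hγ i)⟩
end

section
/- Let v, w be elements of a finite Weyl group W with v ≤ w in Bruhat order. If dim Ker(vw⁻¹ + 1) = l(w) − l(v), then (vw⁻¹)² = 1 and l_Δ(vw⁻¹) = l(w) − l(v). -/
set_option linter.unusedSectionVars false

open scoped RealInnerProductSpace
open Module

variable {V : Type*} [NormedAddCommGroup V] [InnerProductSpace ℝ V] [FiniteDimensional ℝ V]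

/-!
Write `x = v w⁻¹`. Deleting the letters of a reduced word for `w` that are not in a subword
for `v` exhibits `x` as a product of at most `l(w) - l(v)` reflections, and a product of `k`
reflections moves at most a `k`-dimensional subspace: `dim range (x - 1) ≤ k`. On the other
hand `ker (x + 1) ⊆ range (x - 1)`, so the hypothesis squeezes
`l(w) - l(v) = dim ker (x + 1) ≤ dim range (x - 1) ≤ l_Δ(x) ≤ l(w) - l(v)`.
Equality forces `ker (x + 1) = range (x - 1)`, i.e. `(x + 1)(x - 1) = 0`.
-/

section LinearAlgebra

variable {K M : Type*} [Field K] [AddCommGroup M] [Module K M] [FiniteDimensional K M]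

lemma finrank_range_mul_sub_one_le (f g : Module.End K M) :
    finrank K (LinearMap.range (f * g - 1)) ≤
      finrank K (LinearMap.range (f - 1)) + finrank K (LinearMap.range (g - 1)) := by
  have hfg : f * g - 1 = f ∘ₗ (g - 1) + (f - 1) := by
    ext x
    simp [Module.End.mul_apply]
  calc finrank K (LinearMap.range (f * g - 1))
      ≤ finrank K (LinearMap.range (f ∘ₗ (g - 1)) ⊔ LinearMap.range (f - 1) : Submodule K M) := by
        rw [hfg]
        exact Submodule.finrank_mono (LinearMap.range_add_le _ _)
    _ ≤ finrank K (LinearMap.range (f ∘ₗ (g - 1))) + finrank K (LinearMap.range (f - 1)) :=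
        Submodule.finrank_add_le_finrank_add_finrank _ _
    _ ≤ finrank K (LinearMap.range (g - 1)) + finrank K (LinearMap.range (f - 1)) := by
        gcongr
        rw [LinearMap.range_comp]
        exact Submodule.finrank_map_le _ _
    _ = _ := add_comm _ _

lemma ker_add_one_le_range_sub_one (h2 : (2 : K) ≠ 0) (f : Module.End K M) :
    LinearMap.ker (f + 1) ≤ LinearMap.range (f - 1) := by
  intro u hu
  have hfu : f u = -u := eq_neg_of_add_eq_zero_left hu
  refine ⟨(-2⁻¹ : K) • u, ?_⟩
  rw [LinearMap.sub_apply, map_smul, hfu, Module.End.one_apply, ← sub_eq_zero]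
  calc (-2⁻¹ : K) • -u - (-2⁻¹ : K) • u - u = ((2⁻¹ * 2 : K) - 1) • u := by module
    _ = 0 := by rw [inv_mul_cancel₀ h2, sub_self, zero_smul]

lemma mul_self_eq_one_of_finrank_range_sub_one_le (h2 : (2 : K) ≠ 0) {f : Module.End K M}
    (hf : finrank K (LinearMap.range (f - 1)) ≤ finrank K (LinearMap.ker (f + 1))) :
    f * f = 1 := by
  have heq : LinearMap.ker (f + 1) = LinearMap.range (f - 1) :=
    Submodule.eq_of_le_of_finrank_le (ker_add_one_le_range_sub_one h2 f) hf
  ext u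
  have hmem : (f + 1) ((f - 1) u) = 0 := by
    rw [← LinearMap.mem_ker, heq]
    exact LinearMap.mem_range_self _ u
  have : (f + 1) ((f - 1) u) = f (f u) - u := by
    simp only [LinearMap.add_apply, LinearMap.sub_apply, Module.End.one_apply, map_sub]
    abel
  rwa [this, sub_eq_zero] at hmem

end LinearAlgebra

section Reflections

lemma sref_inv (γ : V) : (sref γ)⁻¹ = sref γ :=
  rfl

lemma inner_sref (γ x y : V) : ⟪sref γ x, sref γ y⟫ = ⟪x, y⟫ := by
  rcases eq_or_ne γ 0 with rfl | h
  · simp [sref_apply]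
  · have hγ : ⟪γ, γ⟫ ≠ 0 := inner_self_ne_zero.mpr h
    simp only [sref_apply, inner_sub_left, inner_sub_right, real_inner_smul_left,
      real_inner_smul_right, real_inner_comm x γ]
    field_simp
    ring

lemma conj_sref {g : V ≃ₗ[ℝ] V} (hg : ∀ x y, ⟪g x, g y⟫ = ⟪x, y⟫) (γ : V) :
    g * sref γ * g⁻¹ = sref (g γ) := by
  ext x
  have hx : g (g⁻¹ x) = x := g.apply_symm_apply x
  have hinner : ⟪γ, g⁻¹ x⟫ = ⟪g γ, x⟫ := by rw [← hg, hx]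
  change g (sref γ (g⁻¹ x)) = _
  rw [sref_apply, sref_apply, map_sub, map_smul, hx, hinner, hg]

lemma conj_list_prod_sref {g : V ≃ₗ[ℝ] V} (hg : ∀ x y, ⟪g x, g y⟫ = ⟪x, y⟫) (L : List V) :
    g * (L.map sref).prod * g⁻¹ = ((L.map g).map sref).prod := by
  induction L with
  | nil => simp
  | cons γ L ih =>
    rw [List.map_cons, List.map_cons, List.map_cons, List.prod_cons, List.prod_cons, ← ih,
      ← conj_sref hg]
    group

lemma finrank_range_sref_sub_one_le (γ : V) :
    finrank ℝ (LinearMap.range ((sref γ : V →ₗ[ℝ] V) - 1)) ≤ 1 := by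
  have hle : LinearMap.range ((sref γ : V →ₗ[ℝ] V) - 1) ≤ ℝ ∙ γ := by
    rintro _ ⟨x, rfl⟩
    have : ((sref γ : V →ₗ[ℝ] V) - 1) x = (-(2 * ⟪γ, x⟫ / ⟪γ, γ⟫)) • γ := by
      simp only [LinearMap.sub_apply, Module.End.one_apply, LinearEquiv.coe_coe, sref_apply]
      module
    rw [this]
    exact Submodule.smul_mem _ _ (Submodule.mem_span_singleton_self γ)
  calc finrank ℝ (LinearMap.range ((sref γ : V →ₗ[ℝ] V) - 1))
      ≤ finrank ℝ (ℝ ∙ γ) := Submodule.finrank_mono hle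
    _ ≤ 1 := by simpa using finrank_span_le_card ({γ} : Set V)

lemma finrank_range_list_prod_sref_sub_one_le (L : List V) :
    finrank ℝ (LinearMap.range (((L.map sref).prod : V →ₗ[ℝ] V) - 1)) ≤ L.length := by
  induction L with
  | nil => simp [← Module.End.one_eq_id]
  | cons γ L ih =>
    rw [List.map_cons, List.prod_cons, LinearEquiv.coe_toLinearMap_mul, List.length_cons,
      add_comm]
    exact (finrank_range_mul_sub_one_le _ _).trans
      (add_le_add (finrank_range_sref_sub_one_le γ) ih)

end Reflections

section ReflectionLength

variable {Δ : Set V} {x : V ≃ₗ[ℝ] V} {L : List V}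

lemma exists_ofFn_eq_of_list_prod_sref (hL : ∀ γ ∈ L, γ ∈ Δ) (hx : x = (L.map sref).prod) :
    ∃ γ : Fin L.length → V, (∀ i, γ i ∈ Δ) ∧ x = (List.ofFn fun i => sref (γ i)).prod :=
  ⟨L.get, fun i => hL _ (L.get_mem i), by rw [hx, List.ofFn_comp' L.get sref, List.ofFn_get]⟩

lemma reflLength_le_length (hL : ∀ γ ∈ L, γ ∈ Δ) (hx : x = (L.map sref).prod) :
    reflLength Δ x ≤ L.length :=
  Nat.sInf_le (exists_ofFn_eq_of_list_prod_sref hL hx)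

lemma finrank_range_sub_one_le_reflLength (hL : ∀ γ ∈ L, γ ∈ Δ)
    (hx : x = (L.map sref).prod) :
    finrank ℝ (LinearMap.range ((x : V →ₗ[ℝ] V) - 1)) ≤ reflLength Δ x := by
  obtain ⟨γ, -, hγ⟩ := Nat.sInf_mem (s := {r | ∃ γ : Fin r → V, (∀ i, γ i ∈ Δ) ∧
    x = (List.ofFn fun i => sref (γ i)).prod}) ⟨_, exists_ofFn_eq_of_list_prod_sref hL hx⟩
  have hγ' : x = ((List.ofFn γ).map sref).prod := hγ.trans (by rw [List.map_ofFn]; rfl)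
  have := finrank_range_list_prod_sref_sub_one_le (List.ofFn γ)
  rwa [← hγ', List.length_ofFn] at this

end ReflectionLength

section Words

variable {n : ℕ} {α : Fin n → V}

lemma len_le_length {l : List (Fin n)} {w : V ≃ₗ[ℝ] V} (hl : IsWord α l w) :
    len α w ≤ l.length :=
  Nat.sInf_le ⟨l, hl, rfl⟩

lemma exists_list_prod_sref_of_sublist {Δ : Set V}
    (hrefl : ∀ γ ∈ Δ, ∀ β ∈ Δ, sref γ β ∈ Δ) (hα : ∀ j, α j ∈ Δ)
    {l' l : List (Fin n)} (h : l'.Sublist l) :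
    ∃ L : List V, (∀ γ ∈ L, γ ∈ Δ) ∧ L.length = l.length - l'.length ∧
      (l'.map fun j => sref (α j)).prod * ((l.map fun j => sref (α j)).prod)⁻¹
        = (L.map sref).prod := by
  induction h with
  | slnil => exact ⟨[], by simp, by simp, by simp⟩
  | @cons l' l a h ih =>
    obtain ⟨L, hL, hlen, heq⟩ := ih
    refine ⟨L ++ [α a], ?_, ?_, ?_⟩
    · simpa [or_imp, forall_and] using ⟨hL, hα a⟩
    · simp only [List.length_append, List.length_cons, List.length_nil, hlen]
      have := h.length_le
      omega
    · simp only [List.map_cons, List.prod_cons, mul_inv_rev, sref_inv, List.map_append,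
        List.prod_append, List.map_nil, List.prod_nil, mul_one, ← heq]
      group
  | @cons_cons l' l a h ih =>
    obtain ⟨L, hL, hlen, heq⟩ := ih
    refine ⟨L.map (sref (α a)), ?_, by simpa using hlen, ?_⟩
    · simp only [List.mem_map]
      rintro _ ⟨β, hβ, rfl⟩
      exact hrefl _ (hα a) _ (hL β hβ)
    · rw [← conj_list_prod_sref (inner_sref (α a)), ← heq]
      simp only [List.map_cons, List.prod_cons, mul_inv_rev, sref_inv]
      group

end Words

theorem statement5 {Δ Pos : Set V} {n : ℕ} {α : Fin n → V}
    (hΔ : IsRootSystem Δ) (hb : IsBase Δ Pos α)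
    (v w : V ≃ₗ[ℝ] V) (hvw : bruhatLE α v w)
    (hker : finrank ℝ (LinearMap.ker ((↑(v * w⁻¹) : V →ₗ[ℝ] V) + 1)) =
      len α w - len α v) :
    (v * w⁻¹) ^ 2 = 1 ∧ reflLength Δ (v * w⁻¹) = len α w - len α v := by
  obtain ⟨l, hlw, hllen, l', hsub, hl'v⟩ := hvw
  obtain ⟨L, hLΔ, hLlen, hL⟩ := exists_list_prod_sref_of_sublist hΔ.refl_mem
    (fun j => hb.pos_subset (hb.simple_mem j)) hsub
  rw [hlw, hl'v] at hL
  have hLle : L.length ≤ len α w - len α v := by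
    have := len_le_length hl'v
    omega
  have hrank := (finrank_range_list_prod_sref_sub_one_le L).trans hLle
  rw [← hL, ← hker] at hrank
  refine ⟨?_, le_antisymm ((reflLength_le_length hLΔ hL).trans hLle) ?_⟩
  · rw [pow_two]
    exact LinearEquiv.toLinearMap_injective
      (mul_self_eq_one_of_finrank_range_sub_one_le two_ne_zero hrank)
  · calc len α w - len α v
        = finrank ℝ (LinearMap.ker ((↑(v * w⁻¹) : V →ₗ[ℝ] V) + 1)) := hker.symm
      _ ≤ finrank ℝ (LinearMap.range ((↑(v * w⁻¹) : V →ₗ[ℝ] V) - 1)) :=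
          Submodule.finrank_mono (ker_add_one_le_range_sub_one two_ne_zero _)
      _ ≤ reflLength Δ (v * w⁻¹) := finrank_range_sub_one_le_reflLength hLΔ hL
end

section
/- Let v, w be elements of a finite Weyl group W with v ≤ w, and suppose v = s_{γ₁}⋯s_{γ_d} w for pairwise orthogonal positive roots γ₁, …, γ_d with d = l(w) − l(v). Then (vw⁻¹)² = 1 and l_Δ(vw⁻¹) = l(w) − l(v). -/
set_option linter.unusedSectionVars false

open scoped RealInnerProductSpace
open Module

variable {V : Type*} [NormedAddCommGroup V] [InnerProductSpace ℝ V] [FiniteDimensional ℝ V]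

section OrthogonalReflections

variable {d : ℕ} {γ : Fin d → V}

lemma prod_sref_ofFn_apply (horth : Pairwise fun i j => ⟪γ i, γ j⟫ = 0) (x : V) :
    (List.ofFn fun i => sref (γ i)).prod x = x - ∑ i, (2 * ⟪γ i, x⟫ / ⟪γ i, γ i⟫) • γ i := by
  induction d with
  | zero => simp
  | succ d ih =>
    have horth' : Pairwise fun i j : Fin d => ⟪γ i.succ, γ j.succ⟫ = 0 :=
      fun i j hij => horth (Fin.succ_injective _ |>.ne hij)
    have hinner : ⟪γ 0, x - ∑ i : Fin d, (2 * ⟪γ i.succ, x⟫ / ⟪γ i.succ, γ i.succ⟫) • γ i.succ⟫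
        = ⟪γ 0, x⟫ := by
      simp [inner_sub_right, inner_sum, real_inner_smul_right,
        horth (Fin.succ_ne_zero _).symm]
    rw [List.ofFn_succ, List.prod_cons, LinearEquiv.mul_apply, ih horth', sref_apply, hinner,
      Fin.sum_univ_succ]
    abel

lemma inner_prod_sref_ofFn_apply (hγ : ∀ i, γ i ≠ 0)
    (horth : Pairwise fun i j => ⟪γ i, γ j⟫ = 0) (i : Fin d) (x : V) :
    ⟪γ i, (List.ofFn fun i => sref (γ i)).prod x⟫ = -⟪γ i, x⟫ := by
  have hi : ⟪γ i, γ i⟫ ≠ 0 := inner_self_ne_zero.mpr (hγ i)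
  rw [prod_sref_ofFn_apply horth, inner_sub_right, inner_sum,
    Finset.sum_eq_single i (fun j _ hji => by rw [real_inner_smul_right, horth hji.symm, mul_zero])
      (by simp), real_inner_smul_right]
  field_simp
  ring

lemma prod_sref_ofFn_apply_self (hγ : ∀ i, γ i ≠ 0)
    (horth : Pairwise fun i j => ⟪γ i, γ j⟫ = 0) (i : Fin d) :
    (List.ofFn fun i => sref (γ i)).prod (γ i) = -γ i := by
  have hi : ⟪γ i, γ i⟫ ≠ 0 := inner_self_ne_zero.mpr (hγ i)
  rw [prod_sref_ofFn_apply horth, Finset.sum_eq_single i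
    (fun j _ hji => by rw [horth hji, mul_zero, zero_div, zero_smul]) (by simp),
    mul_div_assoc, div_self hi, mul_one, two_smul]
  abel

lemma prod_sref_ofFn_sq (hγ : ∀ i, γ i ≠ 0) (horth : Pairwise fun i j => ⟪γ i, γ j⟫ = 0) :
    (List.ofFn fun i => sref (γ i)).prod ^ 2 = 1 := by
  ext x
  rw [sq, LinearEquiv.mul_apply, LinearEquiv.coe_one, id,
    prod_sref_ofFn_apply horth ((List.ofFn fun i => sref (γ i)).prod x)]
  simp_rw [inner_prod_sref_ofFn_apply hγ horth, prod_sref_ofFn_apply horth x]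
  simp [neg_div]

lemma prod_sref_ofFn_apply_sub_mem_span {r : ℕ} (δ : Fin r → V) (x : V) :
    (List.ofFn fun i => sref (δ i)).prod x - x ∈ Submodule.span ℝ (Set.range δ) := by
  induction r with
  | zero => simp
  | succ r ih =>
    set y := (List.ofFn fun i => sref (δ (Fin.succ i))).prod x
    have hy : y - x ∈ Submodule.span ℝ (Set.range δ) :=
      Submodule.span_mono (Set.range_comp_subset_range Fin.succ δ) (ih (δ ∘ Fin.succ))
    have hs : sref (δ 0) y - y ∈ Submodule.span ℝ (Set.range δ) := by
      rw [sref_apply, sub_sub_cancel_left]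
      exact Submodule.neg_mem _ (Submodule.smul_mem _ _ (Submodule.subset_span ⟨0, rfl⟩))
    rw [List.ofFn_succ, List.prod_cons, LinearEquiv.mul_apply, ← sub_add_sub_cancel _ y]
    exact add_mem hs hy

/-- A product of `d` orthogonal reflections moves a `d`-dimensional subspace, while a product
of `r` reflections moves only vectors of the span of its `r` roots. -/
lemma card_le_of_prod_sref_ofFn_eq (hγ : ∀ i, γ i ≠ 0)
    (horth : Pairwise fun i j => ⟪γ i, γ j⟫ = 0) {r : ℕ} (δ : Fin r → V)
    (h : (List.ofFn fun i => sref (γ i)).prod = (List.ofFn fun i => sref (δ i)).prod) :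
    d ≤ r := by
  have hmem : ∀ j, γ j ∈ Submodule.span ℝ (Set.range δ) := by
    intro j
    have hmoved := prod_sref_ofFn_apply_sub_mem_span δ (γ j)
    rw [← h, prod_sref_ofFn_apply_self hγ horth, ← neg_add', ← two_smul ℝ] at hmoved
    simpa using Submodule.smul_mem _ (-(1 / 2) : ℝ) hmoved
  calc d = finrank ℝ (Submodule.span ℝ (Set.range γ)) := by
        rw [finrank_span_eq_card (linearIndependent_of_ne_zero_of_inner_eq_zero hγ horth),
          Fintype.card_fin]
    _ ≤ finrank ℝ (Submodule.span ℝ (Set.range δ)) :=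
        Submodule.finrank_mono (Submodule.span_le.mpr (Set.range_subset_iff.mpr hmem))
    _ ≤ r := by simpa [Set.finrank] using finrank_range_le_card (R := ℝ) δ

lemma reflLength_prod_sref_ofFn {Δ : Set V} (hΔ : (0 : V) ∉ Δ) (hγΔ : ∀ i, γ i ∈ Δ)
    (horth : Pairwise fun i j => ⟪γ i, γ j⟫ = 0) :
    reflLength Δ (List.ofFn fun i => sref (γ i)).prod = d := by
  have hγ : ∀ i, γ i ≠ 0 := fun i h => hΔ (h ▸ hγΔ i)
  refine le_antisymm (Nat.sInf_le ⟨γ, hγΔ, rfl⟩) (le_csInf ⟨d, γ, hγΔ, rfl⟩ ?_)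
  rintro r ⟨δ, -, hδ⟩
  exact card_le_of_prod_sref_ofFn_eq hγ horth δ hδ

end OrthogonalReflections

theorem statement6_general {Δ Pos : Set V} {n : ℕ} {α : Fin n → V}
    (hΔ : IsRootSystem Δ) (hb : IsBase Δ Pos α)
    (v w : V ≃ₗ[ℝ] V)
    {d : ℕ} (hd : d = len α w - len α v)
    (γ : Fin d → V) (hγ : ∀ i, γ i ∈ Pos)
    (horth : ∀ i j, i ≠ j → ⟪γ i, γ j⟫ = 0)
    (hprod : v = (List.ofFn fun i => sref (γ i)).prod * w) :
    (v * w⁻¹) ^ 2 = 1 ∧ reflLength Δ (v * w⁻¹) = len α w - len α v := by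
  have hγΔ : ∀ i, γ i ∈ Δ := fun i => hb.pos_subset (hγ i)
  have hγ0 : ∀ i, γ i ≠ 0 := fun i h => hΔ.nonzero (h ▸ hγΔ i)
  rw [← hd, hprod, mul_inv_cancel_right]
  exact ⟨prod_sref_ofFn_sq hγ0 horth, reflLength_prod_sref_ofFn hΔ.nonzero hγΔ horth⟩

theorem statement6 {Δ Pos : Set V} {n : ℕ} {α : Fin n → V}
    (hΔ : IsRootSystem Δ) (hb : IsBase Δ Pos α)
    (v w : V ≃ₗ[ℝ] V) (hvw : bruhatLE α v w)
    {d : ℕ} (hd : d = len α w - len α v)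
    (γ : Fin d → V) (hγ : ∀ i, γ i ∈ Pos)
    (horth : ∀ i j, i ≠ j → ⟪γ i, γ j⟫ = 0)
    (hprod : v = (List.ofFn fun i => sref (γ i)).prod * w) :
    (v * w⁻¹) ^ 2 = 1 ∧ reflLength Δ (v * w⁻¹) = len α w - len α v :=
  statement6_general hΔ hb v w hd γ hγ horth hprod
end
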